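/- Let W be a real p×q matrix, α > 0, let D be a symmetric positive definite q×q matrix, and define C = √2 · W (α I + Wᵀ W)^(−1/2) D^(1/2). Then 2 I − C D^(−1) Cᵀ = 2α (α I + W Wᵀ)^(−1). In particular 2 I − C D^(−1) Cᵀ is symmetric positive definite. -/

import Mathlib

open Matrix

open scoped ComplexOrder in
/-- The square root of a positive semidefinite matrix, as defined in Mathlib of December 2024
(removed since then). -/
noncomputable def Matrix.PosSemidef.sqrt {n 𝕜 : Type*} [Fintype n] [RCLike 𝕜] [DecidableEq n]
    {A : Matrix n n 𝕜} (hA : A.PosSemidef) : Matrix n n 𝕜 :=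
  hA.1.eigenvectorUnitary.1 * diagonal ((↑) ∘ (√·) ∘ hA.1.eigenvalues) *
    (star hA.1.eigenvectorUnitary : Matrix n n 𝕜)

open scoped ComplexOrder in
theorem Matrix.PosSemidef.sqrt_mul_self {n 𝕜 : Type*} [Fintype n] [RCLike 𝕜] [DecidableEq n]
    {A : Matrix n n 𝕜} (hA : A.PosSemidef) : hA.sqrt * hA.sqrt = A := by
  unfold Matrix.PosSemidef.sqrt
  set U := hA.1.eigenvectorUnitary
  have hU : (star U : Matrix n n 𝕜) * U.1 = 1 := Unitary.coe_star_mul_self U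
  have hd : diagonal ((↑) ∘ (√·) ∘ hA.1.eigenvalues) * diagonal ((↑) ∘ (√·) ∘ hA.1.eigenvalues)
      = diagonal (RCLike.ofReal ∘ hA.1.eigenvalues : n → 𝕜) := by
    rw [diagonal_mul_diagonal]
    congr 1
    funext i
    simp only [Function.comp_apply]
    rw [← RCLike.ofReal_mul, Real.mul_self_sqrt (hA.eigenvalues_nonneg i)]
  conv_rhs => rw [hA.1.spectral_theorem]
  rw [Unitary.conjStarAlgAut_apply, ← hd]
  calc U.1 * diagonal ((↑) ∘ (√·) ∘ hA.1.eigenvalues) * (star U : Matrix n n 𝕜) *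
        (U.1 * diagonal ((↑) ∘ (√·) ∘ hA.1.eigenvalues) * (star U : Matrix n n 𝕜))
      = U.1 * diagonal ((↑) ∘ (√·) ∘ hA.1.eigenvalues) * ((star U : Matrix n n 𝕜) * U.1) *
        diagonal ((↑) ∘ (√·) ∘ hA.1.eigenvalues) * (star U : Matrix n n 𝕜) := by
        simp only [Matrix.mul_assoc]
    _ = _ := by rw [hU, Matrix.mul_one]; simp only [Matrix.mul_assoc]; rfl

open scoped ComplexOrder in
theorem Matrix.PosSemidef.posSemidef_sqrt {n 𝕜 : Type*} [Fintype n] [RCLike 𝕜] [DecidableEq n]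
    {A : Matrix n n 𝕜} (hA : A.PosSemidef) : hA.sqrt.PosSemidef := by
  unfold Matrix.PosSemidef.sqrt
  have h := (posSemidef_diagonal_iff.mpr (fun i => (by
    simp only [Function.comp_apply, RCLike.ofReal_nonneg]; exact Real.sqrt_nonneg _) :
      ∀ i, 0 ≤ ((↑) ∘ (√·) ∘ hA.1.eigenvalues : n → 𝕜) i)).mul_mul_conjTranspose_same
    hA.1.eigenvectorUnitary.1
  simpa [Matrix.star_eq_conjTranspose] using h

theorem stmt6 {p q : ℕ} (W : Matrix (Fin p) (Fin q) ℝ) (α : ℝ) (hα : 0 < α)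
    (D : Matrix (Fin q) (Fin q) ℝ) (hD : D.PosDef)
    (hP : (α • (1 : Matrix (Fin q) (Fin q) ℝ) + Wᵀ * W).PosDef)
    (C : Matrix (Fin p) (Fin q) ℝ)
    (hC : C = Real.sqrt 2 • (W * (hP.posSemidef.sqrt)⁻¹ * hD.posSemidef.sqrt)) :
    (2 : ℝ) • (1 : Matrix (Fin p) (Fin p) ℝ) - C * D⁻¹ * Cᵀ
        = (2 * α) • (α • (1 : Matrix (Fin p) (Fin p) ℝ) + W * Wᵀ)⁻¹ ∧
      ((2 : ℝ) • (1 : Matrix (Fin p) (Fin p) ℝ) - C * D⁻¹ * Cᵀ).PosDef := by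
  set P : Matrix (Fin q) (Fin q) ℝ := α • 1 + Wᵀ * W with hPdef
  set Q : Matrix (Fin p) (Fin p) ℝ := α • 1 + W * Wᵀ with hQdef
  set S := hP.posSemidef.sqrt with hSdef
  set T := hD.posSemidef.sqrt with hTdef
  have hQpos : Q.PosDef := by
    rw [hQdef, smul_one_eq_diagonal]
    exact (Matrix.posDef_diagonal_iff.mpr fun _ => hα).add_posSemidef
      (by simpa [conjTranspose_eq_transpose_of_trivial] using posSemidef_self_mul_conjTranspose W)
  -- invertibility facts
  have hSS : S * S = P := hP.posSemidef.sqrt_mul_self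
  have hTT : T * T = D := hD.posSemidef.sqrt_mul_self
  have hSu : IsUnit S := by
    have : IsUnit (S.det * S.det) := by
      rw [← det_mul, hSS]; exact hP.isUnit.map detMonoidHom
    exact (isUnit_iff_isUnit_det S).mpr (isUnit_of_mul_isUnit_left this)
  have hTu : IsUnit T := by
    have : IsUnit (T.det * T.det) := by
      rw [← det_mul, hTT]; exact hD.isUnit.map detMonoidHom
    exact (isUnit_iff_isUnit_det T).mpr (isUnit_of_mul_isUnit_left this)
  have hSt : Sᵀ = S := by
    have := hP.posSemidef.posSemidef_sqrt.isHermitian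
    exact (conjTranspose_eq_transpose_of_trivial S).symm.trans this.eq
  have hTDT : T * D⁻¹ * T = 1 := by
    rw [← hTT, Matrix.mul_inv_rev, ← Matrix.mul_assoc,
      Matrix.mul_nonsing_inv T ((isUnit_iff_isUnit_det T).mp hTu), Matrix.one_mul,
      Matrix.nonsing_inv_mul T ((isUnit_iff_isUnit_det T).mp hTu)]
  have hSinv : S⁻¹ * S⁻¹ = P⁻¹ := by rw [← hSS, Matrix.mul_inv_rev]
  -- compute C D⁻¹ Cᵀ
  have hCDC : C * D⁻¹ * Cᵀ = (2 : ℝ) • (W * P⁻¹ * Wᵀ) := by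
    rw [hC]
    rw [transpose_smul, Matrix.smul_mul, Matrix.smul_mul, Matrix.mul_smul, smul_smul,
      Real.mul_self_sqrt (by norm_num)]
    congr 1
    have hTs : Tᵀ = T := by
      have := hD.posSemidef.posSemidef_sqrt.isHermitian
      exact (conjTranspose_eq_transpose_of_trivial T).symm.trans this.eq
    rw [transpose_mul, transpose_mul, transpose_nonsing_inv, hSt, hTs]
    calc W * S⁻¹ * T * D⁻¹ * (T * (S⁻¹ * Wᵀ))
        = W * S⁻¹ * (T * D⁻¹ * T) * (S⁻¹ * Wᵀ) := by
          simp only [Matrix.mul_assoc]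
      _ = W * (S⁻¹ * S⁻¹) * Wᵀ := by rw [hTDT]; simp only [Matrix.mul_one, Matrix.mul_assoc]
      _ = W * P⁻¹ * Wᵀ := by rw [hSinv]
  -- Woodbury
  have hQW : Q * W = W * P := by
    rw [hPdef, hQdef, Matrix.add_mul, Matrix.mul_add, Matrix.smul_mul, Matrix.mul_smul,
      Matrix.one_mul, Matrix.mul_one, Matrix.mul_assoc]
  have hWP : W * P⁻¹ = Q⁻¹ * W := by
    have h1 : Q⁻¹ * (Q * W) * P⁻¹ = Q⁻¹ * (W * P) * P⁻¹ := by rw [hQW]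
    rw [← Matrix.mul_assoc, Matrix.nonsing_inv_mul Q ((isUnit_iff_isUnit_det Q).mp hQpos.isUnit),
      Matrix.one_mul, Matrix.mul_assoc, Matrix.mul_assoc,
      Matrix.mul_nonsing_inv P ((isUnit_iff_isUnit_det P).mp hP.isUnit), Matrix.mul_one] at h1
    exact h1
  have hmain : (2 : ℝ) • (1 : Matrix (Fin p) (Fin p) ℝ) - C * D⁻¹ * Cᵀ = (2 * α) • Q⁻¹ := by
    rw [hCDC, hWP, ← smul_sub]
    have : (1 : Matrix (Fin p) (Fin p) ℝ) - Q⁻¹ * W * Wᵀ = α • Q⁻¹ := by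
      have hQQ : Q⁻¹ * Q = 1 := Matrix.nonsing_inv_mul Q ((isUnit_iff_isUnit_det Q).mp hQpos.isUnit)
      calc (1 : Matrix (Fin p) (Fin p) ℝ) - Q⁻¹ * W * Wᵀ
          = Q⁻¹ * Q - Q⁻¹ * (W * Wᵀ) := by rw [hQQ, Matrix.mul_assoc]
        _ = Q⁻¹ * (Q - W * Wᵀ) := by rw [Matrix.mul_sub]
        _ = Q⁻¹ * (α • 1) := by rw [hQdef]; congr 1; abel
        _ = α • Q⁻¹ := by rw [Matrix.mul_smul, Matrix.mul_one]
    rw [this, smul_smul]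
  refine ⟨hmain, ?_⟩
  rw [hmain]
  have : ((2 * α) • Q⁻¹).PosDef := by
    rw [hQdef] at *
    exact hQpos.inv.smul (by positivity)
  rw [hQdef] at this
  exact this
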